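/- arXiv:1601.04895 — 2 statements merged into one kernel-verified Lean document; each statement's English description precedes it below -/
import Mathlib

section
/- For every real number x > 0, letting g(x) = x - ln(1+x), the quantity f(x,c) = c·g(x) + √(2·g(x)) - x is strictly negative for c = 2/3 and strictly positive for c = 1; moreover f(x,c) < 0 for every c ≤ 2/3 and f(x,c) > 0 for every c ≥ 1. -/
/-!
Write `L = log (1 + x)` and `g = x - L > 0`. Since `g > 0`, `c * g + √(2 * g) - x` is increasing
in `c`, so everything follows from `L < √(2 * g) < (x + 2 * L) / 3`, i.e. from the signs at
`c = 1` and `c = 2 / 3`. The left inequality is `1 + L + L ^ 2 / 2 < exp L = 1 + x`. The right one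
is tight to fourth order at `0`, so it needs a lower bound for the logarithm that is exact to that
order: the `[2/2]` Padé approximant `x * (3 * x + 6) / (x ^ 2 + 6 * x + 6)`, for which the
inequality becomes a polynomial identity.
-/

open Real

lemma quadratic_lt_exp_of_pos {t : ℝ} (ht : 0 < t) : 1 + t + t ^ 2 / 2 < exp t := by
  have h := sum_le_exp_of_nonneg ht.le 4
  simp only [Finset.sum_range_succ, Finset.sum_range_zero, Nat.factorial] at h
  norm_num at h
  nlinarith [pow_pos ht 3]

lemma log_one_add_lt_sqrt {x : ℝ} (hx : 0 < x) :
    log (1 + x) < √(2 * (x - log (1 + x))) := by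
  have hL : 0 < log (1 + x) := log_pos (by linarith)
  have hexp := quadratic_lt_exp_of_pos hL
  rw [exp_log (by linarith)] at hexp
  rw [lt_sqrt hL.le]
  linarith

/-- The left side is the `[2/2]` Padé approximant of `log (1 + x)`; the derivative of the
difference is `x ^ 4 / ((1 + x) * (x ^ 2 + 6 * x + 6) ^ 2)`. -/
lemma mul_div_le_log_one_add {x : ℝ} (hx : 0 ≤ x) :
    x * (3 * x + 6) / (x ^ 2 + 6 * x + 6) ≤ log (1 + x) := by
  suffices MonotoneOn (fun y => log (1 + y) - y * (3 * y + 6) / (y ^ 2 + 6 * y + 6))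
      (Set.Ici 0) by
    simpa using this Set.self_mem_Ici hx hx
  have hderiv : ∀ y : ℝ, 0 ≤ y →
      HasDerivAt (fun y => log (1 + y) - y * (3 * y + 6) / (y ^ 2 + 6 * y + 6))
        (y ^ 4 / ((1 + y) * (y ^ 2 + 6 * y + 6) ^ 2)) y := by
    intro y hy
    have h1 : (1 : ℝ) + y ≠ 0 := by positivity
    have hD : y ^ 2 + 6 * y + 6 ≠ 0 := by positivity
    refine ((((hasDerivAt_id' y).const_add 1).log h1).sub
      (((hasDerivAt_id' y).mul (((hasDerivAt_id' y).const_mul 3).add_const 6)).div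
        ((((hasDerivAt_id' y).pow 2).add ((hasDerivAt_id' y).const_mul 6)).add_const 6)
          hD)).congr_deriv ?_
    simp only [Pi.add_apply, Pi.mul_apply, Pi.pow_apply]
    field_simp
    ring
  refine monotoneOn_of_hasDerivWithinAt_nonneg (convex_Ici 0)
    (fun y hy => (hderiv y hy).continuousAt.continuousWithinAt)
    (fun y hy => (hderiv y (interior_subset hy)).hasDerivWithinAt) fun y hy => ?_
  have : 0 ≤ y := interior_subset hy
  positivity

lemma sqrt_lt_add_two_mul_log_div_three {x : ℝ} (hx : 0 < x) :
    √(2 * (x - log (1 + x))) < (x + 2 * log (1 + x)) / 3 := by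
  set L := log (1 + x)
  set P := x * (3 * x + 6) / (x ^ 2 + 6 * x + 6)
  have hL : 0 < L := log_pos (by linarith)
  have hPL : P ≤ L := mul_div_le_log_one_add hx.le
  have hP : 0 ≤ P := by positivity
  have hpade : 18 * (x - P) < (x + 2 * P) ^ 2 := by
    have : (x + 2 * P) ^ 2 - 18 * (x - P) =
        x ^ 4 * (x ^ 2 + 6 * x + 18) / (x ^ 2 + 6 * x + 6) ^ 2 := by
      simp only [P]
      field_simp
      ring
    have : 0 < x ^ 4 * (x ^ 2 + 6 * x + 18) / (x ^ 2 + 6 * x + 6) ^ 2 := by positivity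
    linarith
  rw [sqrt_lt' (by positivity)]
  nlinarith [mul_nonneg (sub_nonneg.mpr hPL) (by positivity : (0:ℝ) ≤ x + L + P)]

theorem f_sign (x : ℝ) (hx : 0 < x) :
    (2 / 3 * (x - Real.log (1 + x)) + Real.sqrt (2 * (x - Real.log (1 + x))) - x < 0) ∧
    (1 * (x - Real.log (1 + x)) + Real.sqrt (2 * (x - Real.log (1 + x))) - x > 0) ∧
    (∀ c : ℝ, c ≤ 2 / 3 →
      c * (x - Real.log (1 + x)) + Real.sqrt (2 * (x - Real.log (1 + x))) - x < 0) ∧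
    (∀ c : ℝ, 1 ≤ c →
      c * (x - Real.log (1 + x)) + Real.sqrt (2 * (x - Real.log (1 + x))) - x > 0) := by
  have hg : 0 < x - log (1 + x) := by
    linarith [log_lt_sub_one_of_pos (by linarith : 0 < 1 + x) (by linarith)]
  have hlow := log_one_add_lt_sqrt hx
  have hupp := sqrt_lt_add_two_mul_log_div_three hx
  have hneg : ∀ c : ℝ, c ≤ 2 / 3 →
      c * (x - log (1 + x)) + √(2 * (x - log (1 + x))) - x < 0 := fun c hc => by
    linarith [mul_le_mul_of_nonneg_right hc hg.le]
  have hpos : ∀ c : ℝ, 1 ≤ c →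
      c * (x - log (1 + x)) + √(2 * (x - log (1 + x))) - x > 0 := fun c hc => by
    linarith [mul_le_mul_of_nonneg_right hc hg.le]
  exact ⟨hneg _ le_rfl, hpos _ le_rfl, hneg, hpos⟩
end

section
/- Let u > 0 and let w be a real number with w ≤ -1 satisfying w·e^w = -e^{-u-1} (i.e., w = W_{-1}(-e^{-u-1}), the lower real branch of the Lambert W function). Then -1 - √(2u) - u < w < -1 - √(2u) - (2/3)·u. -/
/-!
Put `t = -1 - w ≥ 0` and `s = √(2u)`, so `u = s² / 2`. The equation `w e^w = -e^{-u-1}` becomes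
`F t = e^{-u}` for `F x = (1 + x) e^{-x}`, which is strictly decreasing on `[0, ∞)`. Both bounds
then amount to comparing `F` at `s + s²/2` and at `s + s²/3` with `e^{-s²/2}`: the first comparison
is `1 + s + s²/2 < e^s`, the second is `1 < (1 + s + s²/3) e^{s²/6 - s}`, whose left side minus the
right vanishes at `0` and has derivative `s³/9 · e^{s²/6 - s}`.
-/

open Real Set

lemma strictAntiOn_one_add_mul_exp_neg :
    StrictAntiOn (fun x : ℝ => (1 + x) * exp (-x)) (Ici 0) := by
  apply strictAntiOn_of_deriv_neg (convex_Ici 0) (by fun_prop)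
  intro x hx
  rw [interior_Ici, mem_Ioi] at hx
  have hd : HasDerivAt (fun x : ℝ => (1 + x) * exp (-x))
      (1 * exp (-x) + (1 + x) * (exp (-x) * -1)) x :=
    ((hasDerivAt_id' x).const_add 1).mul (hasDerivAt_id' x).neg.exp
  rw [hd.deriv]
  nlinarith [mul_pos hx (exp_pos (-x))]

lemma one_add_add_sq_div_two_lt_exp {x : ℝ} (hx : 0 < x) : 1 + x + x ^ 2 / 2 < exp x := by
  have h := sum_le_exp_of_nonneg hx.le 4
  simp only [Finset.sum_range_succ, Finset.sum_range_zero, Nat.factorial] at h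
  norm_num at h
  nlinarith [pow_pos hx 3]

lemma one_lt_mul_exp_sq_div_six_sub {x : ℝ} (hx : 0 < x) :
    1 < (1 + x + x ^ 2 / 3) * exp (x ^ 2 / 6 - x) := by
  have hmono : StrictMonoOn (fun x : ℝ => (1 + x + x ^ 2 / 3) * exp (x ^ 2 / 6 - x)) (Ici 0) := by
    apply strictMonoOn_of_deriv_pos (convex_Ici 0) (by fun_prop)
    intro y hy
    rw [interior_Ici, mem_Ioi] at hy
    have hpoly : HasDerivAt (fun x : ℝ => 1 + x + x ^ 2 / 3) (1 + 2 * y / 3) y :=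
      (((hasDerivAt_id' y).const_add 1).add ((hasDerivAt_pow 2 y).div_const 3)).congr_deriv
        (by ring)
    have hexp : HasDerivAt (fun x : ℝ => exp (x ^ 2 / 6 - x))
        (exp (y ^ 2 / 6 - y) * (2 * y / 6 - 1)) y :=
      (((hasDerivAt_pow 2 y).div_const 6).fun_sub (hasDerivAt_id' y)).exp.congr_deriv
        (by ring)
    have hd := hpoly.fun_mul hexp
    have hderiv : (1 + 2 * y / 3) * exp (y ^ 2 / 6 - y)
        + (1 + y + y ^ 2 / 3) * (exp (y ^ 2 / 6 - y) * (2 * y / 6 - 1))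
        = y ^ 3 / 9 * exp (y ^ 2 / 6 - y) := by ring
    rw [hd.deriv, hderiv]
    positivity
  simpa using hmono self_mem_Ici (mem_Ici.2 hx.le) hx

lemma one_add_mul_exp_neg_lt_exp_neg_sq_div_two {s : ℝ} (hs : 0 < s) :
    (1 + (s + s ^ 2 / 2)) * exp (-(s + s ^ 2 / 2)) < exp (-(s ^ 2 / 2)) := by
  have hsplit : exp (-(s + s ^ 2 / 2)) = exp (-(s ^ 2 / 2)) / exp s := by
    rw [← exp_sub]; ring_nf
  rw [hsplit, mul_div_left_comm, mul_lt_iff_lt_one_right (exp_pos _), div_lt_one (exp_pos s),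
    ← add_assoc]
  exact one_add_add_sq_div_two_lt_exp hs

lemma exp_neg_sq_div_two_lt_one_add_mul_exp_neg {s : ℝ} (hs : 0 < s) :
    exp (-(s ^ 2 / 2)) < (1 + (s + s ^ 2 / 3)) * exp (-(s + s ^ 2 / 3)) := by
  have hsplit : exp (-(s + s ^ 2 / 3)) = exp (s ^ 2 / 6 - s) * exp (-(s ^ 2 / 2)) := by
    rw [← exp_add]; ring_nf
  rw [hsplit, ← mul_assoc, lt_mul_iff_one_lt_left (exp_pos _), ← add_assoc]
  exact one_lt_mul_exp_sq_div_six_sub hs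

theorem lambert_Wm1_bounds (u w : ℝ) (hu : 0 < u) (hw : w ≤ -1)
    (hWw : w * Real.exp w = -Real.exp (-u - 1)) :
    -1 - Real.sqrt (2 * u) - u < w ∧ w < -1 - Real.sqrt (2 * u) - 2 / 3 * u := by
  set s := √(2 * u)
  have hs : 0 < s := sqrt_pos.2 (by positivity)
  have hu_eq : u = s ^ 2 / 2 := by rw [sq_sqrt (by positivity)]; ring
  have ht : -1 - w ∈ Ici (0 : ℝ) := mem_Ici.2 (by linarith)
  have hF : (1 + (-1 - w)) * exp (-(-1 - w)) = exp (-(s ^ 2 / 2)) := by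
    have h : exp (-u - 1) = exp (-u) * exp (-1) := by rw [← exp_add]; ring_nf
    rw [← hu_eq, ← mul_right_cancel_iff_of_pos (exp_pos (-1)), ← h, ← neg_eq_iff_eq_neg.2 hWw,
      mul_assoc, ← exp_add]
    ring_nf
  have hF_gt := one_add_mul_exp_neg_lt_exp_neg_sq_div_two hs
  have hF_lt := exp_neg_sq_div_two_lt_one_add_mul_exp_neg hs
  rw [← hF] at hF_gt hF_lt
  constructor
  · have := (strictAntiOn_one_add_mul_exp_neg.lt_iff_gt (mem_Ici.2 (by positivity)) ht).1 hF_gt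
    linarith
  · have := (strictAntiOn_one_add_mul_exp_neg.lt_iff_gt ht (mem_Ici.2 (by positivity))).1 hF_lt
    linarith
end
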